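/- Let m be odd, n = 2m, x̄ = x^{2^m}. Let θ₁ ∈ F_{2^m} be nonzero and θ₂ ∈ F_{2^n} with Tr_{F_{2^m}/F_2}(θ₂θ̄₂/θ₁²) = 0. Then for every nonzero a ∈ F_{2^n}, the element M(a) := θ₁·a·ā + θ̄₂·ā² + θ₂·a² is nonzero. -/

import Mathlib

/-!
Suppose `M(a) = 0` with `a ≠ 0`. In characteristic 2 this says exactly that
`v := θ̄₂ ā / (θ₁ a)` solves `v² + v = θ₂ θ̄₂ / θ₁²`. Since `v^(2^m) - v` is the trace
`Tr_{F_{2^m}/F_2}(v² + v)` (a telescoping sum), the trace hypothesis gives `v̄ = v`, i.e.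
`θ₂ a / (θ₁ ā) = θ̄₂ ā / (θ₁ a)`, so `θ₂ a² = θ̄₂ ā²` and `M(a) = θ₁ a ā ≠ 0`.
-/

open Finset

theorem pow_expChar_pow_sub_self_eq_sum {R : Type*} [CommRing R] (p : ℕ) [ExpChar R p] (x : R)
    (k : ℕ) : x ^ p ^ k - x = ∑ i ∈ range k, (x ^ p - x) ^ p ^ i := by
  have hterm (i : ℕ) : (x ^ p - x) ^ p ^ i = x ^ p ^ (i + 1) - x ^ p ^ i := by
    rw [sub_pow_expChar_pow, ← pow_mul, ← pow_succ']
  simp_rw [hterm, sum_range_sub (fun i ↦ x ^ p ^ i), pow_zero, pow_one]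

theorem GaloisField.pow_card_eq_self {p n : ℕ} [Fact p.Prime] (hn : n ≠ 0)
    (x : GaloisField p n) : x ^ p ^ n = x := by
  let _ := Fintype.ofFinite (GaloisField p n)
  rw [← GaloisField.card p n hn, Nat.card_eq_fintype_card, FiniteField.pow_card]

theorem quadratic_conj_ne_zero {F : Type*} [Field F] [CharP F 2] {m : ℕ}
    (hconj : ∀ x : F, (x ^ 2 ^ m) ^ 2 ^ m = x) {θ₁ θ₂ a : F}
    (hθ₁m : θ₁ ^ 2 ^ m = θ₁) (hθ₁ : θ₁ ≠ 0)
    (htr : ∑ i ∈ range m, (θ₂ * θ₂ ^ 2 ^ m / θ₁ ^ 2) ^ 2 ^ i = 0) (ha : a ≠ 0) :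
    θ₁ * a * a ^ 2 ^ m + θ₂ ^ 2 ^ m * (a ^ 2 ^ m) ^ 2 + θ₂ * a ^ 2 ≠ 0 := by
  set abar := a ^ 2 ^ m
  set θ₂bar := θ₂ ^ 2 ^ m
  have habar : abar ≠ 0 := pow_ne_zero _ ha
  have htwo : (2 : F) = 0 := CharTwo.two_eq_zero
  intro hM
  set v := θ₂bar * abar / (θ₁ * a)
  have hv : v ^ 2 - v = θ₂ * θ₂bar / θ₁ ^ 2 := by
    simp only [v]
    field_simp
    linear_combination θ₂bar * hM - θ₂bar * (θ₁ * a * abar + θ₂ * a ^ 2) * htwo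
  have hv_fixed : v ^ 2 ^ m = v := by
    rw [← sub_eq_zero, pow_expChar_pow_sub_self_eq_sum, hv, htr]
  have hv_conj : v ^ 2 ^ m = θ₂ * a / (θ₁ * abar) := by
    rw [div_pow, mul_pow, mul_pow, hconj, hconj, hθ₁m]
  have hsym : θ₂ * a ^ 2 = θ₂bar * abar ^ 2 := by
    rw [hv_conj, div_eq_div_iff (mul_ne_zero hθ₁ habar) (mul_ne_zero hθ₁ ha)] at hv_fixed
    exact mul_left_cancel₀ hθ₁ (by linear_combination hv_fixed)
  exact mul_ne_zero (mul_ne_zero hθ₁ ha) habar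
    (by linear_combination hM - hsym - θ₂bar * abar ^ 2 * htwo)

theorem stmt_11_general (m : ℕ) (hm0 : 0 < m) (θ₁ θ₂ : GaloisField 2 (2 * m))
    (hθ₁m : θ₁ ^ 2 ^ m = θ₁) (hθ₁ : θ₁ ≠ 0)
    (htr : ∑ i ∈ Finset.range m, (θ₂ * θ₂ ^ 2 ^ m / θ₁ ^ 2) ^ 2 ^ i = 0) :
    ∀ a : GaloisField 2 (2 * m), a ≠ 0 →
      θ₁ * a * a ^ 2 ^ m + θ₂ ^ 2 ^ m * (a ^ 2 ^ m) ^ 2 + θ₂ * a ^ 2 ≠ 0 := by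
  have hconj (x : GaloisField 2 (2 * m)) : (x ^ 2 ^ m) ^ 2 ^ m = x := by
    rw [← pow_mul, ← pow_add, ← two_mul, GaloisField.pow_card_eq_self (by omega)]
  exact fun a ha ↦ quadratic_conj_ne_zero hconj hθ₁m hθ₁ htr ha

/-- Lemma 5 (1): if `θ₁ ∈ F_{2^m}*` and `Tr_{F_{2^m}/F_2}(θ₂θ̄₂/θ₁²) = 0`, then for every
nonzero `a ∈ F_{2^n}` (`n = 2m`, `m` odd), `M(a) = θ₁·a·ā + θ̄₂·ā² + θ₂·a² ≠ 0`. -/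
theorem stmt_11 (m : ℕ) (hm : Odd m) (hm0 : 0 < m) (θ₁ θ₂ : GaloisField 2 (2 * m))
    (hθ₁m : θ₁ ^ 2 ^ m = θ₁) (hθ₁ : θ₁ ≠ 0)
    (htr : ∑ i ∈ Finset.range m, (θ₂ * θ₂ ^ 2 ^ m / θ₁ ^ 2) ^ 2 ^ i = 0) :
    ∀ a : GaloisField 2 (2 * m), a ≠ 0 →
      θ₁ * a * a ^ 2 ^ m + θ₂ ^ 2 ^ m * (a ^ 2 ^ m) ^ 2 + θ₂ * a ^ 2 ≠ 0 :=
  stmt_11_general m hm0 θ₁ θ₂ hθ₁m hθ₁ htr
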